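/- A labelled poset P on {1,...,n} is an interval-poset (i.e., there exist binary trees T₁ ≤ T₂ in the Tamari order such that the linear extensions of P are exactly the union of the sylvester classes of all trees in the interval [T₁, T₂]) if and only if P satisfies: (1) whenever a < c and a ⊴ c in P, then b ⊴ c for all a < b < c; and (2) whenever a < c and c ⊴ a in P, then b ⊴ a for all a < b < c. This gives a bijection between such posets and intervals of the Tamari lattice on trees of size n. -/

import Mathlib

/-- Unlabelled binary trees. -/
inductive Tree0 where
  | leaf : Tree0
  | node : Tree0 → Tree0 → Tree0
deriving DecidableEq

namespace Tree0

/-- Number of nodes. -/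
def size : Tree0 → ℕ
  | leaf => 0
  | node l r => size l + size r + 1

/-- One right rotation somewhere in the tree: `y(x(A,B),C) ↦ x(A,y(B,C))`. -/
inductive Rot : Tree0 → Tree0 → Prop
  | root (A B C : Tree0) : Rot (node (node A B) C) (node A (node B C))
  | left {l l' : Tree0} (r : Tree0) : Rot l l' → Rot (node l r) (node l' r)
  | right (l : Tree0) {r r' : Tree0} : Rot r r' → Rot (node l r) (node l r')

/-- The Tamari order: transitive closure of right rotation. -/
def tamariLE : Tree0 → Tree0 → Prop := Relation.ReflTransGen Rot

end Tree0

/-- Labelled binary trees (labels in `ℕ`). -/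
inductive BT where
  | leaf : BT
  | node : BT → ℕ → BT → BT
deriving DecidableEq

namespace BT

/-- Binary search tree insertion: `k` goes left if `≤` the root, right if `>`. -/
def bstInsert (k : ℕ) : BT → BT
  | leaf => node leaf k leaf
  | node l x r => if k ≤ x then node (bstInsert k l) x r else node l x (bstInsert k r)

/-- Insert the letters of a word from right to left into an empty BST. -/
def abr (w : List ℕ) : BT := w.foldr bstInsert leaf

/-- Underlying unlabelled shape. -/
def shape : BT → Tree0
  | leaf => Tree0.leaf
  | node l _ r => Tree0.node (shape l) (shape r)

end BT

/-- The word of values of a permutation of `{1,…,n}`. -/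
def wordOf {n : ℕ} (σ : Equiv.Perm (Fin n)) : List ℕ :=
  List.ofFn fun i => (σ i : ℕ) + 1

/-- The binary search tree shape of a permutation (its sylvester class). -/
def abrShape {n : ℕ} (σ : Equiv.Perm (Fin n)) : Tree0 :=
  BT.shape (BT.abr (wordOf σ))

/-- `σ` is a linear extension of the partial order `le` on labels: whenever `a ⊴ b`,
the value `a` occurs no later than `b` in the word of `σ` (position of value `a`
is `σ⁻¹ a`). -/
def IsLinExtOf {n : ℕ} (le : Fin n → Fin n → Prop) (σ : Equiv.Perm (Fin n)) : Prop :=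
  ∀ a b : Fin n, le a b → σ⁻¹ a ≤ σ⁻¹ b

/-!
Label the nodes of a binary tree by `0, 1, …` in in-order. A right rotation only enlarges right
subtrees and only shrinks left subtrees; conversely, if every right subtree of `T` is contained in
the corresponding right subtree of `T'`, a rotation at the node just after a right subtree of `T`
that is too small moves `T` towards `T'`, so `T ≤ T'`. In the binary search tree of a
permutation, `j` lies in the right (left) subtree of `a` iff all labels from `a` to `j` occur
before `a`. Hence `T₁ ≤ shape σ ≤ T₂` says exactly that `σ` is a linear extension of the union `q`
of the decreasing forest of `T₁` and the increasing forest of `T₂`.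

A partial order is determined by its linear extensions, so the poset is then the transitive closure
of `q`; conditions (1) and (2) hold for `q` and pass to its transitive closure. Conversely, under
(1) and (2) the sets `{j > a | j ⊴ a}` and `{j < a | j ⊴ a}` are intervals adjacent to `a`,
nested by transitivity, hence the right and left subtrees of two trees `T₁` and `T₂`; the poset is
the reflexive closure of the union of their forests, and `T₁ ≤ T₂` by passing through any linear
extension.
-/

namespace Tree0

variable {l r T T' : Tree0} {k a : ℕ}

/- `rightSize T k a` and `leftSize T k a` are the sizes of the right and left subtrees of the node
of `T` with in-order label `a`, when the nodes are labelled `k, k + 1, …, k + T.size - 1`; both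
vanish at labels outside that range. -/
def rightSize : Tree0 → ℕ → ℕ → ℕ
  | leaf, _, _ => 0
  | node l r, k, a =>
    if a < k + l.size then rightSize l k a
    else if a = k + l.size then r.size
    else rightSize r (k + l.size + 1) a

def leftSize : Tree0 → ℕ → ℕ → ℕ
  | leaf, _, _ => 0
  | node l r, k, a =>
    if a < k + l.size then leftSize l k a
    else if a = k + l.size then l.size
    else leftSize r (k + l.size + 1) a

lemma rightSize_node_of_lt (h : a < k + l.size) : rightSize (node l r) k a = rightSize l k a := by
  simp [rightSize, h]

lemma rightSize_node_of_eq (h : a = k + l.size) : rightSize (node l r) k a = r.size := by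
  simp [rightSize, h]

lemma rightSize_node_of_gt (h : k + l.size < a) :
    rightSize (node l r) k a = rightSize r (k + l.size + 1) a := by
  simp [rightSize, h.not_gt, h.ne']

lemma leftSize_node_of_lt (h : a < k + l.size) : leftSize (node l r) k a = leftSize l k a := by
  simp [leftSize, h]

lemma leftSize_node_of_eq (h : a = k + l.size) : leftSize (node l r) k a = l.size := by
  simp [leftSize, h]

lemma leftSize_node_of_gt (h : k + l.size < a) :
    leftSize (node l r) k a = leftSize r (k + l.size + 1) a := by
  simp [leftSize, h.not_gt, h.ne']

lemma le_and_lt_of_rightSize_pos (h : 0 < rightSize T k a) : k ≤ a ∧ a < k + T.size := by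
  induction T generalizing k with
  | leaf => simp [rightSize] at h
  | node l r ihl ihr =>
    simp only [size]
    rcases lt_trichotomy a (k + l.size) with ha | ha | ha
    · rw [rightSize_node_of_lt ha] at h; have := ihl h; omega
    · rw [rightSize_node_of_eq ha] at h; omega
    · rw [rightSize_node_of_gt ha] at h; have := ihr h; omega

lemma le_and_lt_of_leftSize_pos (h : 0 < leftSize T k a) : k ≤ a ∧ a < k + T.size := by
  induction T generalizing k with
  | leaf => simp [leftSize] at h
  | node l r ihl ihr =>
    simp only [size]
    rcases lt_trichotomy a (k + l.size) with ha | ha | ha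
    · rw [leftSize_node_of_lt ha] at h; have := ihl h; omega
    · rw [leftSize_node_of_eq ha] at h; omega
    · rw [leftSize_node_of_gt ha] at h; have := ihr h; omega

lemma add_rightSize_lt (h : a < k + T.size) : a + rightSize T k a < k + T.size := by
  induction T generalizing k with
  | leaf => simpa [rightSize] using h
  | node l r ihl ihr =>
    simp only [size] at *
    rcases lt_trichotomy a (k + l.size) with ha | ha | ha
    · rw [rightSize_node_of_lt ha]; have := ihl ha; omega
    · rw [rightSize_node_of_eq ha]; omega
    · rw [rightSize_node_of_gt ha]; have := ihr (k := k + l.size + 1) (by omega); omega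

lemma add_leftSize_le (h : k ≤ a) : k + leftSize T k a ≤ a := by
  induction T generalizing k with
  | leaf => simpa [leftSize] using h
  | node l r ihl ihr =>
    rcases lt_trichotomy a (k + l.size) with ha | ha | ha
    · rw [leftSize_node_of_lt ha]; exact ihl h
    · rw [leftSize_node_of_eq ha]; omega
    · rw [leftSize_node_of_gt ha]; have := ihr (k := k + l.size + 1) (by omega); omega

/-- Right subtrees are nested: the subtree of `d` lies inside the subtree of its ancestor `x`. -/
lemma add_rightSize_le_of_le_add_rightSize {x d : ℕ} (hxd : x < d)
    (hd : d ≤ x + rightSize T k x) : d + rightSize T k d ≤ x + rightSize T k x := by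
  induction T generalizing k with
  | leaf => simp [rightSize] at hd; omega
  | node l r ihl ihr =>
    rcases lt_trichotomy x (k + l.size) with hx | hx | hx
    · rw [rightSize_node_of_lt hx] at hd ⊢
      have := add_rightSize_lt hx
      rw [rightSize_node_of_lt (by omega)]
      exact ihl hd
    · rw [rightSize_node_of_eq hx] at hd ⊢
      rw [rightSize_node_of_gt (by omega)]
      have := add_rightSize_lt (T := r) (k := k + l.size + 1) (a := d) (by omega); omega
    · rw [rightSize_node_of_gt hx] at hd ⊢
      rw [rightSize_node_of_gt (by omega)]
      exact ihr hd

lemma add_rightSize_lt_of_le_add_leftSize {x : ℕ} (hax : a < x)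
    (hx : x ≤ a + leftSize T k x) : a + rightSize T k a < x := by
  induction T generalizing k with
  | leaf => simp [leftSize] at hx; omega
  | node l r ihl ihr =>
    rcases lt_trichotomy x (k + l.size) with h | h | h
    · rw [leftSize_node_of_lt h] at hx
      rw [rightSize_node_of_lt (by omega)]
      exact ihl hx
    · rw [leftSize_node_of_eq h] at hx
      rw [rightSize_node_of_lt (by omega)]
      have := add_rightSize_lt (T := l) (k := k) (a := a) (by omega); omega
    · rw [leftSize_node_of_gt h] at hx
      have := add_leftSize_le (T := r) (k := k + l.size + 1) (a := x) (by omega)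
      rw [rightSize_node_of_gt (by omega)]
      exact ihr hx

/-- The node following the right subtree of `a` has `a` in its left subtree. -/
lemma rightSize_lt_leftSize_succ (hk : k ≤ a) (h : a + rightSize T k a + 1 < k + T.size) :
    rightSize T k a < leftSize T k (a + rightSize T k a + 1) := by
  induction T generalizing k with
  | leaf => simp [size] at h; omega
  | node l r ihl ihr =>
    simp only [size] at h
    rcases lt_trichotomy a (k + l.size) with ha | ha | ha
    · rw [rightSize_node_of_lt ha] at h ⊢
      have := add_rightSize_lt ha
      rcases (show a + rightSize l k a + 1 ≤ k + l.size by omega).lt_or_eq with h' | h'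
      · rw [leftSize_node_of_lt h']; exact ihl hk h'
      · rw [leftSize_node_of_eq h']; omega
    · rw [rightSize_node_of_eq ha] at h ⊢; omega
    · rw [rightSize_node_of_gt ha] at h ⊢
      rw [leftSize_node_of_gt (by omega)]
      exact ihr (by omega) (by omega)

lemma Rot.size_eq (h : Rot T T') : T'.size = T.size := by
  induction h <;> simp [size] <;> omega

lemma tamariLE.size_eq (h : tamariLE T T') : T'.size = T.size := by
  induction h with
  | refl => rfl
  | tail _ hr ih => rw [hr.size_eq, ih]

lemma rightSize_rotate_of_ne (A B C : Tree0) (h : a ≠ k + A.size) :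
    rightSize (node A (node B C)) k a = rightSize (node (node A B) C) k a := by
  rcases lt_trichotomy a (k + A.size) with h' | h' | h'
  · rw [rightSize_node_of_lt h', rightSize_node_of_lt (by simp only [size]; omega),
      rightSize_node_of_lt h']
  · exact absurd h' h
  · rcases lt_trichotomy a (k + A.size + 1 + B.size) with h'' | h'' | h''
    · rw [rightSize_node_of_gt h', rightSize_node_of_lt h'',
        rightSize_node_of_lt (by simp only [size]; omega), rightSize_node_of_gt h']
    · rw [rightSize_node_of_gt h', rightSize_node_of_eq h'',
        rightSize_node_of_eq (by simp only [size]; omega)]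
    · rw [rightSize_node_of_gt h', rightSize_node_of_gt h'',
        rightSize_node_of_gt (by simp only [size]; omega)]
      simp only [size]
      congr 1; omega

lemma Rot.rightSize_le (h : Rot T T') (k a : ℕ) : rightSize T k a ≤ rightSize T' k a := by
  induction h generalizing k with
  | root A B C =>
    by_cases h : a = k + A.size
    · rw [rightSize_node_of_lt (by simp only [size]; omega), rightSize_node_of_eq h,
        rightSize_node_of_eq h]
      simp only [size]; omega
    · rw [rightSize_rotate_of_ne A B C h]
  | @left l l' r hr ih =>
    rcases lt_trichotomy a (k + l.size) with h | h | h
    · rw [rightSize_node_of_lt h, rightSize_node_of_lt (by rwa [hr.size_eq])]; exact ih k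
    · rw [rightSize_node_of_eq h, rightSize_node_of_eq (by rwa [hr.size_eq])]
    · rw [rightSize_node_of_gt h, rightSize_node_of_gt (by rwa [hr.size_eq]), hr.size_eq]
  | right l hr ih =>
    rcases lt_trichotomy a (k + l.size) with h | h | h
    · rw [rightSize_node_of_lt h, rightSize_node_of_lt h]
    · rw [rightSize_node_of_eq h, rightSize_node_of_eq h, hr.size_eq]
    · rw [rightSize_node_of_gt h, rightSize_node_of_gt h]; exact ih _

lemma Rot.leftSize_le (h : Rot T T') (k a : ℕ) : leftSize T' k a ≤ leftSize T k a := by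
  induction h generalizing k with
  | root A B C =>
    have hAB : k + (node A B).size = k + A.size + 1 + B.size := by simp only [size]; omega
    rcases lt_trichotomy a (k + A.size) with h | h | h
    · rw [leftSize_node_of_lt h, leftSize_node_of_lt (l := node A B) (by omega),
        leftSize_node_of_lt h]
    · rw [leftSize_node_of_eq h, leftSize_node_of_lt (l := node A B) (by omega),
        leftSize_node_of_eq h]
    · rcases lt_trichotomy a (k + A.size + 1 + B.size) with h' | h' | h'
      · rw [leftSize_node_of_gt h, leftSize_node_of_lt h',
          leftSize_node_of_lt (l := node A B) (by omega), leftSize_node_of_gt h]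
      · rw [leftSize_node_of_gt h, leftSize_node_of_eq h', leftSize_node_of_eq (by omega)]
        simp only [size]; omega
      · rw [leftSize_node_of_gt h, leftSize_node_of_gt h',
          leftSize_node_of_gt (l := node A B) (by omega), hAB]
  | @left l l' r hr ih =>
    rcases lt_trichotomy a (k + l.size) with h | h | h
    · rw [leftSize_node_of_lt h, leftSize_node_of_lt (by rwa [hr.size_eq])]; exact ih k
    · rw [leftSize_node_of_eq h, leftSize_node_of_eq (by rwa [hr.size_eq]), hr.size_eq]
    · rw [leftSize_node_of_gt h, leftSize_node_of_gt (by rwa [hr.size_eq]), hr.size_eq]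
  | right l hr ih =>
    rcases lt_trichotomy a (k + l.size) with h | h | h
    · rw [leftSize_node_of_lt h, leftSize_node_of_lt h]
    · rw [leftSize_node_of_eq h, leftSize_node_of_eq h]
    · rw [leftSize_node_of_gt h, leftSize_node_of_gt h]; exact ih _

lemma tamariLE.rightSize_le (h : tamariLE T T') (k a : ℕ) :
    rightSize T k a ≤ rightSize T' k a := by
  induction h with
  | refl => rfl
  | tail _ hr ih => exact ih.trans (hr.rightSize_le k a)

lemma tamariLE.leftSize_le (h : tamariLE T T') (k a : ℕ) : leftSize T' k a ≤ leftSize T k a := by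
  induction h with
  | refl => rfl
  | tail _ hr ih => exact (hr.leftSize_le k a).trans ih

lemma eq_of_rightSize_eq (hs : T.size = T'.size)
    (h : ∀ a, k ≤ a → a < k + T.size → rightSize T k a = rightSize T' k a) : T = T' := by
  induction T generalizing T' k with
  | leaf => cases T' <;> simp_all [size]
  | node l r ihl ihr =>
    cases T' with
    | leaf => simp [size] at hs
    | node l' r' =>
      simp only [size] at hs h
      have hls : l.size = l'.size := by
        by_contra hne
        rcases Nat.lt_or_gt_of_ne hne with hlt | hlt
        · have hroot := h (k + l.size) (by omega) (by omega)
          rw [rightSize_node_of_eq rfl, rightSize_node_of_lt (by omega)] at hroot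
          have := add_rightSize_lt (T := l') (k := k) (a := k + l.size) (by omega)
          omega
        · have hroot := h (k + l'.size) (by omega) (by omega)
          rw [rightSize_node_of_lt (by omega), rightSize_node_of_eq rfl] at hroot
          have := add_rightSize_lt (T := l) (k := k) (a := k + l'.size) (by omega)
          omega
      have hl : l = l' := ihl hls fun a hka ha => by
        have := h a hka (by omega)
        rwa [rightSize_node_of_lt ha, rightSize_node_of_lt (by omega)] at this
      have hr : r = r' := ihr (k := k + l.size + 1) (by omega) fun a hka ha => by
        have := h a (by omega) (by omega)
        rwa [rightSize_node_of_gt (by omega), rightSize_node_of_gt (by omega), ← hls] at this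
      rw [hl, hr]

/-- The right rotation at `d`, whose left child `x` then acquires the right subtree of `d`. -/
lemma exists_rot_of_leftSize_pos {d : ℕ} (hd : 0 < leftSize T k d) :
    ∃ U x, Rot T U ∧ k ≤ x ∧ x < d ∧ x + rightSize T k x + 1 = d ∧
      x + leftSize T k d = d + leftSize T k x ∧
      (∀ j, j ≠ x → rightSize U k j = rightSize T k j) ∧
      x + rightSize U k x = d + rightSize T k d := by
  induction T generalizing k with
  | leaf => simp [leftSize] at hd
  | node l r ihl ihr =>
    rcases lt_trichotomy d (k + l.size) with h | h | h
    · rw [leftSize_node_of_lt h] at hd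
      obtain ⟨U, x, hrot, hkx, hxd, hx, hleft, hother, hxU⟩ := ihl hd
      have hs := hrot.size_eq
      refine ⟨node U r, x, hrot.left r, hkx, hxd, ?_, ?_, fun j hj => ?_, ?_⟩
      · rwa [rightSize_node_of_lt (by omega)]
      · rwa [leftSize_node_of_lt h, leftSize_node_of_lt (show x < k + l.size by omega)]
      · rcases lt_trichotomy j (k + l.size) with h' | h' | h'
        · rw [rightSize_node_of_lt (by omega), rightSize_node_of_lt h']; exact hother j hj
        · rw [rightSize_node_of_eq (by omega), rightSize_node_of_eq h']
        · rw [rightSize_node_of_gt (by omega), rightSize_node_of_gt h', hs]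
      · rwa [rightSize_node_of_lt (by omega), rightSize_node_of_lt (by omega)]
    · rw [leftSize_node_of_eq h] at hd
      cases l with
      | leaf => simp [size] at hd
      | node A B =>
        simp only [size] at h
        refine ⟨node A (node B r), k + A.size, Rot.root A B r, by omega, by omega, ?_, ?_,
          fun j hj => rightSize_rotate_of_ne A B r hj, ?_⟩
        · rw [rightSize_node_of_lt (by simp only [size]; omega), rightSize_node_of_eq rfl]; omega
        · rw [leftSize_node_of_eq (l := node A B) (by simp only [size]; omega),
            leftSize_node_of_lt (l := node A B) (by simp only [size]; omega),
            leftSize_node_of_eq rfl]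
          simp only [size]; omega
        · rw [rightSize_node_of_eq rfl, rightSize_node_of_eq (by simp only [size]; omega)]
          simp only [size]; omega
    · rw [leftSize_node_of_gt h] at hd
      obtain ⟨U, x, hrot, hkx, hxd, hx, hleft, hother, hxU⟩ := ihr hd
      refine ⟨node l U, x, hrot.right l, by omega, hxd, ?_, ?_, fun j hj => ?_, ?_⟩
      · rwa [rightSize_node_of_gt (by omega)]
      · rwa [leftSize_node_of_gt h, leftSize_node_of_gt (show k + l.size < x by omega)]
      · rcases lt_trichotomy j (k + l.size) with h' | h' | h'
        · rw [rightSize_node_of_lt h', rightSize_node_of_lt h']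
        · rw [rightSize_node_of_eq h', rightSize_node_of_eq h', hrot.size_eq]
        · rw [rightSize_node_of_gt h', rightSize_node_of_gt h']; exact hother j hj
      · rwa [rightSize_node_of_gt (by omega), rightSize_node_of_gt h]

lemma exists_rot_of_rightSize_lt (hs : T.size = T'.size)
    (hle : ∀ a, rightSize T k a ≤ rightSize T' k a) (hlt : rightSize T k a < rightSize T' k a) :
    ∃ U x, Rot T U ∧ x < k + T.size ∧ rightSize T k x < rightSize U k x ∧
      (∀ j, j ≠ x → rightSize U k j = rightSize T k j) ∧
      ∀ j, rightSize U k j ≤ rightSize T' k j := by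
  obtain ⟨hka, haT'⟩ := le_and_lt_of_rightSize_pos (show 0 < rightSize T' k a by omega)
  have hbound := add_rightSize_lt haT'
  obtain ⟨d, hd⟩ : ∃ d, d = a + rightSize T k a + 1 := ⟨_, rfl⟩
  have hleft : rightSize T k a < leftSize T k d := hd ▸ rightSize_lt_leftSize_succ hka (by omega)
  obtain ⟨U, x, hrot, hkx, hxd, hx, hxleft, hother, hxU⟩ :=
    exists_rot_of_leftSize_pos (show 0 < leftSize T k d by omega)
  have hviol : rightSize T k x < rightSize T' k x := by
    rcases lt_trichotomy x a with hxa | rfl | hax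
    · by_contra hcon
      have hxeq : rightSize T' k x = rightSize T k x := le_antisymm (by omega) (hle x)
      have := add_rightSize_le_of_le_add_rightSize (T := T') (k := k) hxa (by omega)
      omega
    · exact hlt
    · have := add_rightSize_lt_of_le_add_leftSize (T := T) (k := k) hax (by omega)
      omega
  have hnest := add_rightSize_le_of_le_add_rightSize (T := T') (k := k) hxd (by omega)
  refine ⟨U, x, hrot, by omega, by omega, hother, fun j => ?_⟩
  by_cases hj : j = x
  · subst hj; have := hle d; omega
  · rw [hother j hj]; exact hle j

lemma tamariLE_of_rightSize_le (hs : T.size = T'.size)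
    (hle : ∀ a, rightSize T k a ≤ rightSize T' k a) : tamariLE T T' := by
  generalize hN : ∑ a ∈ Finset.range (k + T.size), (rightSize T' k a - rightSize T k a) = N
  induction N using Nat.strong_induction_on generalizing T with
  | _ N ih =>
    by_cases hviol : ∃ a, rightSize T k a < rightSize T' k a
    · obtain ⟨a, ha⟩ := hviol
      obtain ⟨U, x, hrot, hx, hgrow, hother, hleU⟩ := exists_rot_of_rightSize_lt hs hle ha
      have hsU := hrot.size_eq
      refine .head hrot (ih _ ?_ (hsU.trans hs) hleU rfl)
      rw [← hN, hsU]
      refine Finset.sum_lt_sum (fun j _ => ?_) ⟨x, Finset.mem_range.2 hx, ?_⟩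
      · by_cases hj : j = x
        · subst hj; omega
        · rw [hother j hj]
      · have := hleU x; omega
    · simp only [not_exists, not_lt] at hviol
      rw [eq_of_rightSize_eq hs fun a _ _ => le_antisymm (hle a) (hviol a)]
      exact .refl

lemma rightSize_le_of_leftSize_le (hs : T.size = T'.size)
    (h : ∀ a, leftSize T' k a ≤ leftSize T k a) (a : ℕ) : rightSize T k a ≤ rightSize T' k a := by
  by_contra! hlt
  obtain ⟨hka, haT⟩ := le_and_lt_of_rightSize_pos (show 0 < rightSize T k a by omega)
  have := add_rightSize_lt haT
  have hleft := rightSize_lt_leftSize_succ (T := T') hka (by omega)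
  have := h (a + rightSize T' k a + 1)
  have := add_rightSize_lt_of_le_add_leftSize (T := T) (k := k) (a := a)
    (x := a + rightSize T' k a + 1) (by omega) (by omega)
  omega

lemma exists_rightSize_iff (D : ℕ → ℕ → Prop) (m k : ℕ)
    (hint : ∀ a i j, k ≤ a → a < i → i < j → j < k + m → D j a → D i a)
    (htrans : ∀ a d e, k ≤ a → a < d → d < e → e < k + m → D e d → D d a → D e a) :
    ∃ T : Tree0, T.size = m ∧
      ∀ a j, k ≤ a → a < j → j < k + m → (j ≤ a + rightSize T k a ↔ D j a) := by
  induction m using Nat.strong_induction_on generalizing k with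
  | _ m ih =>
  rcases Nat.eq_zero_or_pos m with rfl | hm
  · exact ⟨leaf, rfl, fun a j h₁ h₂ h₃ => absurd h₃ (by omega)⟩
  classical
  -- the root is the first label whose right subtree reaches the last label `k + m - 1`
  have hex : ∃ a, k ≤ a ∧ (a = k + m - 1 ∨ D (k + m - 1) a) := ⟨k + m - 1, by omega, .inl rfl⟩
  obtain ⟨hkρ, hρ⟩ := Nat.find_spec hex
  set ρ := Nat.find hex
  have hρt : ρ ≤ k + m - 1 := Nat.find_min' hex ⟨by omega, .inl rfl⟩
  have hcut : ∀ a j, k ≤ a → a < ρ → ρ ≤ j → j < k + m → ¬ D j a := by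
    intro a j hka haρ hρj hj hDja
    have hDρa : D ρ a := hρj.eq_or_lt.elim (· ▸ hDja) fun h => hint a ρ j hka haρ h hj hDja
    refine (Nat.find_min hex haρ) ⟨hka, .inr ?_⟩
    rcases hρt.eq_or_lt with heq | hlt
    · exact heq ▸ hDρa
    · exact htrans a ρ _ hka haρ hlt (by omega) (hρ.resolve_left hlt.ne) hDρa
  have hroot : ∀ j, ρ < j → j < k + m → D j ρ := by
    intro j hρj hj
    have hDt : D (k + m - 1) ρ := hρ.resolve_left (by omega)
    rcases (show j ≤ k + m - 1 by omega).eq_or_lt with rfl | h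
    · exact hDt
    · exact hint ρ j _ hkρ hρj h (by omega) hDt
  obtain ⟨Tl, hTl, hl⟩ := ih (ρ - k) (by omega) k
    (fun a i j ha hai hij hj => hint a i j ha hai hij (by omega))
    (fun a d e ha had hde he => htrans a d e ha had hde (by omega))
  obtain ⟨Tr, hTr, hr⟩ := ih (k + m - 1 - ρ) (by omega) (ρ + 1)
    (fun a i j ha hai hij hj => hint a i j (by omega) hai hij (by omega))
    (fun a d e ha had hde he => htrans a d e (by omega) had hde (by omega))
  refine ⟨node Tl Tr, by simp only [size]; omega, fun a j hka haj hj => ?_⟩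
  rcases lt_trichotomy a ρ with h | rfl | h
  · rw [rightSize_node_of_lt (by omega)]
    by_cases hjρ : j < ρ
    · exact hl a j hka haj (by omega)
    · have := add_rightSize_lt (T := Tl) (k := k) (a := a) (by omega)
      exact iff_of_false (by omega) (hcut a j hka h (by omega) hj)
  · rw [rightSize_node_of_eq (by omega)]
    exact iff_of_true (by omega) (hroot j haj hj)
  · rw [rightSize_node_of_gt (by omega), show k + Tl.size + 1 = ρ + 1 by omega]
    exact hr a j h haj (by omega)

lemma exists_leftSize_iff (I : ℕ → ℕ → Prop) (m k : ℕ)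
    (hint : ∀ a i j, k ≤ j → j < i → i < a → a < k + m → I j a → I i a)
    (htrans : ∀ a d e, k ≤ e → e < d → d < a → a < k + m → I e d → I d a → I e a) :
    ∃ T : Tree0, T.size = m ∧
      ∀ a j, k ≤ j → j < a → a < k + m → (a ≤ j + leftSize T k a ↔ I j a) := by
  induction m using Nat.strong_induction_on generalizing k with
  | _ m ih =>
  rcases Nat.eq_zero_or_pos m with rfl | hm
  · exact ⟨leaf, rfl, fun a j h₁ h₂ h₃ => absurd h₃ (by omega)⟩
  classical
  -- the root is the last label whose left subtree reaches the first label `k`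
  let P a := k ≤ a ∧ (a = k ∨ I k a)
  obtain ⟨hkρ, hρ⟩ : P (Nat.findGreatest P (k + m - 1)) :=
    Nat.findGreatest_spec (m := k) (by omega) ⟨le_rfl, .inl rfl⟩
  set ρ := Nat.findGreatest P (k + m - 1)
  have hρt : ρ ≤ k + m - 1 := Nat.findGreatest_le _
  have hcut : ∀ a j, ρ < a → a < k + m → k ≤ j → j ≤ ρ → ¬ I j a := by
    intro a j hρa ha hkj hjρ hIja
    have hIρa : I ρ a := hjρ.eq_or_lt.elim (· ▸ hIja) fun h => hint a ρ j hkj h hρa ha hIja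
    refine Nat.findGreatest_is_greatest hρa (by omega) ⟨by omega, .inr ?_⟩
    rcases hkρ.eq_or_lt with heq | hlt
    · exact heq ▸ hIρa
    · exact htrans a ρ k le_rfl hlt hρa ha (hρ.resolve_left hlt.ne') hIρa
  have hroot : ∀ j, k ≤ j → j < ρ → I j ρ := by
    intro j hkj hjρ
    have hIk : I k ρ := hρ.resolve_left (by omega)
    rcases hkj.eq_or_lt with rfl | h
    · exact hIk
    · exact hint ρ j k le_rfl h hjρ (by omega) hIk
  obtain ⟨Tl, hTl, hl⟩ := ih (ρ - k) (by omega) k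
    (fun a i j hj hji hia ha => hint a i j hj hji hia (by omega))
    (fun a d e he hed hda ha => htrans a d e he hed hda (by omega))
  obtain ⟨Tr, hTr, hr⟩ := ih (k + m - 1 - ρ) (by omega) (ρ + 1)
    (fun a i j hj hji hia ha => hint a i j (by omega) hji hia (by omega))
    (fun a d e he hed hda ha => htrans a d e (by omega) hed hda (by omega))
  refine ⟨node Tl Tr, by simp only [size]; omega, fun a j hkj hja ha => ?_⟩
  rcases lt_trichotomy a ρ with h | rfl | h
  · rw [leftSize_node_of_lt (by omega)]
    exact hl a j hkj hja (by omega)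
  · rw [leftSize_node_of_eq (by omega)]
    exact iff_of_true (by omega) (hroot j hkj hja)
  · rw [leftSize_node_of_gt (by omega), show k + Tl.size + 1 = ρ + 1 by omega]
    by_cases hρj : ρ < j
    · exact hr a j hρj hja (by omega)
    · have := add_leftSize_le (T := Tr) (k := ρ + 1) (a := a) h
      exact iff_of_false (by omega) (hcut a j h ha hkj (by omega))

end Tree0

namespace List

variable {α : Type*} {w : List α} {a b x : α}

theorem Nodup.pair_sublist_iff_idxOf_lt [DecidableEq α] {l : List α}
    (hl : l.Nodup) (hb : b ∈ l) (ha : a ∈ l) : [b, a] <+ l ↔ l.idxOf b < l.idxOf a := by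
  induction l with
  | nil => simp at hb
  | cons c t ih =>
    obtain ⟨hct, ht⟩ := nodup_cons.mp hl
    rcases eq_or_ne b c with rfl | hbc
    · rcases eq_or_ne a b with rfl | hab
      · simp [hct]
      · simp_all [idxOf_cons_ne _ hab.symm]
    · rcases eq_or_ne a c with rfl | hac
      · simp_all [idxOf_cons_ne _ hbc.symm]
        intro h
        exact hct (((sublist_cons_iff.mp h).resolve_right (by simp [hbc])).subset (by simp))
      · simp_all [idxOf_cons_ne _ hbc.symm, idxOf_cons_ne _ hac.symm, sublist_cons_iff]

theorem pair_sublist_append_singleton_iff (hax : a ≠ x) : [b, a] <+ w ++ [x] ↔ [b, a] <+ w := by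
  refine ⟨fun h => ?_, fun h => h.trans (sublist_append_left _ _)⟩
  obtain ⟨l₁, l₂, hl, h₁, h₂⟩ := sublist_append_iff.mp h
  rcases sublist_singleton.mp h₂ with rfl | rfl
  · simpa [hl] using h₁
  · exact absurd (by simpa using congrArg getLast? hl) hax

theorem pair_sublist_append_singleton (hb : b ∈ w) : [b, x] <+ w ++ [x] :=
  (singleton_sublist.2 hb).append (Sublist.refl [x])

theorem pair_sublist_filter_iff (p : α → Bool) (hb : p b) (ha : p a) :
    [b, a] <+ w.filter p ↔ [b, a] <+ w :=
  ⟨fun h => h.trans filter_sublist, fun h => by simpa [hb, ha] using h.filter p⟩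

theorem perm_range'_iff {w : List ℕ} {s m : ℕ} :
    w ~ range' s m ↔ w.Nodup ∧ ∀ j, j ∈ w ↔ s ≤ j ∧ j < s + m := by
  refine ⟨fun h => ⟨h.nodup_iff.2 nodup_range', fun j => by rw [h.mem_iff, mem_range'_1]⟩,
    fun ⟨hnd, hmem⟩ => (perm_ext_iff_of_nodup hnd nodup_range').2 fun j => ?_⟩
  rw [hmem, mem_range'_1]

end List

namespace BT

open List Tree0

variable {w : List ℕ} {k m x : ℕ}

lemma size_shape_bstInsert (x : ℕ) (B : BT) : (bstInsert x B).shape.size = B.shape.size + 1 := by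
  induction B with
  | leaf => rfl
  | node l y r ihl ihr =>
    by_cases h : x ≤ y
    · simp only [bstInsert, h, if_true, shape, Tree0.size, ihl]; omega
    · simp only [bstInsert, h, if_false, shape, Tree0.size, ihr]; omega

lemma size_shape_abr (w : List ℕ) : (abr w).shape.size = w.length := by
  induction w with
  | nil => rfl
  | cons x w ih => exact (size_shape_bstInsert x _).trans (congrArg (· + 1) ih)

lemma foldr_bstInsert_node (w : List ℕ) (l : BT) (x : ℕ) (r : BT) :
    w.foldr bstInsert (node l x r) =
      node ((w.filter (· ≤ x)).foldr bstInsert l) x ((w.filter (¬ · ≤ x)).foldr bstInsert r) := by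
  induction w with
  | nil => rfl
  | cons y w ih =>
    by_cases h : y ≤ x
    · simp [h, ih, bstInsert]
    · simp [h, ih, bstInsert, not_le.mp h]

lemma shape_abr_append_singleton (w : List ℕ) (x : ℕ) :
    (abr (w ++ [x])).shape =
      .node (abr (w.filter (· ≤ x))).shape (abr (w.filter (¬ · ≤ x))).shape := by
  simp only [abr, List.foldr_append, List.foldr_cons, List.foldr_nil, bstInsert,
    foldr_bstInsert_node, shape]

lemma perm_range'_append_singleton (h : w ++ [x] ~ range' k m) :
    w.Nodup ∧ k ≤ x ∧ x < k + m ∧ ∀ j, j ∈ w ↔ k ≤ j ∧ j < k + m ∧ j ≠ x := by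
  obtain ⟨hnd, hmem⟩ := perm_range'_iff.1 h
  have hxw : x ∉ w := fun hx => (nodup_append.1 hnd).2.2 x hx x (by simp) rfl
  obtain ⟨hkx, hxm⟩ := (hmem x).1 (by simp)
  refine ⟨hnd.sublist (sublist_append_left _ _), hkx, hxm, fun j => ?_⟩
  have := hmem j
  simp only [mem_append, mem_singleton] at this
  constructor
  · intro hj; exact ⟨(this.1 (.inl hj)).1, (this.1 (.inl hj)).2, fun h => hxw (h ▸ hj)⟩
  · rintro ⟨h₁, h₂, h₃⟩; exact (this.2 ⟨h₁, h₂⟩).resolve_right h₃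

lemma perm_range'_filter_le (h : w ++ [x] ~ range' k m) :
    w.filter (· ≤ x) ~ range' k (x - k) := by
  obtain ⟨hnd, hkx, hxm, hmem⟩ := perm_range'_append_singleton h
  refine perm_range'_iff.2 ⟨hnd.filter _, fun j => ?_⟩
  simp only [mem_filter, hmem, decide_eq_true_eq]
  omega

lemma perm_range'_filter_gt (h : w ++ [x] ~ range' k m) :
    w.filter (¬ · ≤ x) ~ range' (x + 1) (k + m - 1 - x) := by
  obtain ⟨hnd, hkx, hxm, hmem⟩ := perm_range'_append_singleton h
  refine perm_range'_iff.2 ⟨hnd.filter _, fun j => ?_⟩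
  simp only [mem_filter, hmem, decide_eq_true_eq]
  omega

theorem le_add_rightSize_shape_abr_iff {a j : ℕ} (hw : w ~ range' k m) (haj : a < j) :
    j ≤ a + (abr w).shape.rightSize k a ↔ ∀ i, a < i → i ≤ j → [i, a] <+ w := by
  induction m using Nat.strong_induction_on generalizing k w with
  | _ m ih =>
  rcases eq_nil_or_concat w with rfl | ⟨w, x, rfl⟩
  · exact iff_of_false (by simp [abr, shape, rightSize]; omega)
      fun h => by simpa using h j haj le_rfl
  rw [concat_eq_append] at hw ⊢
  obtain ⟨hnd, hkx, hxm, hmem⟩ := perm_range'_append_singleton hw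
  have hL := perm_range'_filter_le hw
  have hR := perm_range'_filter_gt hw
  have hsL : (abr (w.filter (· ≤ x))).shape.size = x - k := by
    rw [size_shape_abr, hL.length_eq, length_range']
  have hsR : (abr (w.filter (¬ · ≤ x))).shape.size = k + m - 1 - x := by
    rw [size_shape_abr, hR.length_eq, length_range']
  rw [shape_abr_append_singleton]
  rcases lt_trichotomy a x with hax | rfl | hxa
  · rw [rightSize_node_of_lt (by omega)]
    by_cases hjx : j < x
    · rw [ih _ (by omega) hL]
      refine forall₂_congr fun i hai => forall_congr' fun hij => ?_
      rw [pair_sublist_filter_iff _ (by simp; omega) (by simp; omega),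
        pair_sublist_append_singleton_iff hax.ne]
    · have := add_rightSize_lt (T := (abr (w.filter (· ≤ x))).shape) (k := k) (a := a) (by omega)
      refine iff_of_false (by omega) fun h => ?_
      have := (pair_sublist_append_singleton_iff hax.ne).1 (h x hax (by omega))
      exact (hmem x).1 (this.subset (by simp)) |>.2.2 rfl
  · rw [rightSize_node_of_eq (by omega), hsR]
    constructor
    · intro hj i hai hij
      exact pair_sublist_append_singleton ((hmem i).2 ⟨by omega, by omega, by omega⟩)
    · intro h
      have := (h j haj le_rfl).subset (mem_cons_self)
      simp only [mem_append, hmem, mem_singleton] at this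
      omega
  · rw [rightSize_node_of_gt (by omega), hsL, show k + (x - k) + 1 = x + 1 by omega,
      ih _ (by omega) hR]
    refine forall₂_congr fun i hai => forall_congr' fun hij => ?_
    rw [pair_sublist_filter_iff _ (by simp; omega) (by simp; omega),
      pair_sublist_append_singleton_iff hxa.ne']

theorem add_leftSize_shape_abr_iff {a j : ℕ} (hw : w ~ range' k m) (hja : j < a) :
    a ≤ j + (abr w).shape.leftSize k a ↔ ∀ i, j ≤ i → i < a → [i, a] <+ w := by
  induction m using Nat.strong_induction_on generalizing k w with
  | _ m ih =>
  rcases eq_nil_or_concat w with rfl | ⟨w, x, rfl⟩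
  · exact iff_of_false (by simp [abr, shape, leftSize]; omega)
      fun h => by simpa using h j le_rfl hja
  rw [concat_eq_append] at hw ⊢
  obtain ⟨hnd, hkx, hxm, hmem⟩ := perm_range'_append_singleton hw
  have hL := perm_range'_filter_le hw
  have hR := perm_range'_filter_gt hw
  have hsL : (abr (w.filter (· ≤ x))).shape.size = x - k := by
    rw [size_shape_abr, hL.length_eq, length_range']
  rw [shape_abr_append_singleton]
  rcases lt_trichotomy a x with hax | rfl | hxa
  · rw [leftSize_node_of_lt (by omega), ih _ (by omega) hL]
    refine forall₂_congr fun i hji => forall_congr' fun hia => ?_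
    rw [pair_sublist_filter_iff _ (by simp; omega) (by simp; omega),
      pair_sublist_append_singleton_iff hax.ne]
  · rw [leftSize_node_of_eq (by omega), hsL]
    constructor
    · intro hj i hji hia
      exact pair_sublist_append_singleton ((hmem i).2 ⟨by omega, by omega, by omega⟩)
    · intro h
      have := (h j le_rfl hja).subset (mem_cons_self)
      simp only [mem_append, hmem, mem_singleton] at this
      omega
  · rw [leftSize_node_of_gt (by omega), hsL, show k + (x - k) + 1 = x + 1 by omega]
    by_cases hxj : x < j
    · rw [ih _ (by omega) hR]
      refine forall₂_congr fun i hji => forall_congr' fun hia => ?_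
      rw [pair_sublist_filter_iff _ (by simp; omega) (by simp; omega),
        pair_sublist_append_singleton_iff hxa.ne']
    · have := add_leftSize_le (T := (abr (w.filter (¬ · ≤ x))).shape) (k := x + 1) (a := a) hxa
      refine iff_of_false (by omega) fun h => ?_
      have := (pair_sublist_append_singleton_iff hxa.ne').1 (h x (by omega) hxa)
      exact (hmem x).1 (this.subset (by simp)) |>.2.2 rfl

end BT

section Forests

open List Tree0

variable {n : ℕ} {r q : Fin n → Fin n → Prop}

namespace Tree0

variable {T S : Tree0}

lemma rightSize_add_one (T : Tree0) (k a : ℕ) : rightSize T (k + 1) (a + 1) = rightSize T k a := by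
  induction T generalizing k with
  | leaf => rfl
  | node l r ihl ihr =>
    rcases lt_trichotomy a (k + l.size) with h | h | h
    · rw [rightSize_node_of_lt h, rightSize_node_of_lt (by omega), ihl]
    · rw [rightSize_node_of_eq h, rightSize_node_of_eq (by omega)]
    · rw [rightSize_node_of_gt h, rightSize_node_of_gt (by omega),
        show k + 1 + l.size + 1 = k + l.size + 1 + 1 by omega, ihr]

lemma leftSize_add_one (T : Tree0) (k a : ℕ) : leftSize T (k + 1) (a + 1) = leftSize T k a := by
  induction T generalizing k with
  | leaf => rfl
  | node l r ihl ihr =>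
    rcases lt_trichotomy a (k + l.size) with h | h | h
    · rw [leftSize_node_of_lt h, leftSize_node_of_lt (by omega), ihl]
    · rw [leftSize_node_of_eq h, leftSize_node_of_eq (by omega)]
    · rw [leftSize_node_of_gt h, leftSize_node_of_gt (by omega),
        show k + 1 + l.size + 1 = k + l.size + 1 + 1 by omega, ihr]

/-- The decreasing forest of `T` on `Fin n` (in-order labels `0, …, n - 1`): `decRel j a` when
`j > a` lies in the right subtree of `a`. -/
def decRel (T : Tree0) (j a : Fin n) : Prop :=
  a < j ∧ (j : ℕ) ≤ a + T.rightSize 0 a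

/-- The increasing forest of `T`: `incRel j a` when `j < a` lies in the left subtree of `a`. -/
def incRel (T : Tree0) (j a : Fin n) : Prop :=
  j < a ∧ (a : ℕ) ≤ j + T.leftSize 0 a

lemma decRel.of_le {j a i : Fin n} (h : T.decRel j a) (hai : a < i) (hij : i ≤ j) : T.decRel i a :=
  ⟨hai, le_trans (Fin.val_le_of_le hij) h.2⟩

lemma incRel.of_le {j a i : Fin n} (h : T.incRel j a) (hji : j ≤ i) (hia : i < a) : T.incRel i a :=
  ⟨hia, h.2.trans (by have := Fin.val_le_of_le hji; omega)⟩

lemma tamariLE_iff_decRel_imp (hT : T.size = n) (hS : S.size = n) :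
    tamariLE T S ↔ ∀ j a : Fin n, T.decRel j a → S.decRel j a := by
  refine ⟨fun h j a hj => ⟨hj.1, hj.2.trans (by have := h.rightSize_le 0 a; omega)⟩,
    fun h => tamariLE_of_rightSize_le (k := 0) (hT.trans hS.symm) fun a => ?_⟩
  by_contra! hlt
  obtain ⟨-, ha⟩ := le_and_lt_of_rightSize_pos (show 0 < rightSize T 0 a by omega)
  have := add_rightSize_lt ha
  have := (h ⟨a + rightSize T 0 a, by omega⟩ ⟨a, by omega⟩ ⟨by simp [Fin.lt_def]; omega, le_rfl⟩).2
  simp at this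
  omega

lemma tamariLE_iff_incRel_imp (hT : T.size = n) (hS : S.size = n) :
    tamariLE S T ↔ ∀ j a : Fin n, T.incRel j a → S.incRel j a := by
  refine ⟨fun h j a hj => ⟨hj.1, hj.2.trans (by have := h.leftSize_le 0 a; omega)⟩,
    fun h => tamariLE_of_rightSize_le (k := 0) (hS.trans hT.symm)
      (rightSize_le_of_leftSize_le (hS.trans hT.symm) fun a => ?_)⟩
  by_contra! hlt
  obtain ⟨hk, ha⟩ := le_and_lt_of_leftSize_pos (show 0 < leftSize T 0 a by omega)
  have := add_leftSize_le (T := T) hk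
  have := (h ⟨a - leftSize T 0 a, by omega⟩ ⟨a, by omega⟩
    ⟨by simp [Fin.lt_def]; omega, by simp; omega⟩).2
  simp at this
  omega

end Tree0

lemma wordOf_nodup (σ : Equiv.Perm (Fin n)) : (wordOf σ).Nodup :=
  nodup_ofFn.2 fun i j h => σ.injective (Fin.ext (by simpa using h))

lemma wordOf_perm (σ : Equiv.Perm (Fin n)) : wordOf σ ~ range' 1 n := by
  refine perm_range'_iff.2 ⟨wordOf_nodup σ, fun j => ?_⟩
  simp only [wordOf, mem_ofFn]
  constructor
  · rintro ⟨i, rfl⟩; omega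
  · intro hj
    exact ⟨σ⁻¹ ⟨j - 1, by omega⟩, by simp; omega⟩

lemma idxOf_wordOf (σ : Equiv.Perm (Fin n)) (a : Fin n) :
    (wordOf σ).idxOf ((a : ℕ) + 1) = σ⁻¹ a := by
  have hlt : (σ⁻¹ a : ℕ) < (wordOf σ).length := by simp [wordOf]
  have := (wordOf_nodup σ).idxOf_getElem _ hlt
  simpa [wordOf] using this

lemma pair_sublist_wordOf_iff (σ : Equiv.Perm (Fin n)) (j a : Fin n) :
    [(j : ℕ) + 1, (a : ℕ) + 1] <+ wordOf σ ↔ σ⁻¹ j < σ⁻¹ a := by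
  have hmem (b : Fin n) : (b : ℕ) + 1 ∈ wordOf σ := (wordOf_perm σ).mem_iff.2 (by simp; omega)
  rw [(wordOf_nodup σ).pair_sublist_iff_idxOf_lt (hmem j) (hmem a), idxOf_wordOf, idxOf_wordOf,
    Fin.val_fin_lt]

lemma size_abrShape (σ : Equiv.Perm (Fin n)) : (abrShape σ).size = n := by
  rw [abrShape, BT.size_shape_abr, wordOf, length_ofFn]

lemma IsLinExtOf.lt {σ : Equiv.Perm (Fin n)} (hσ : IsLinExtOf r σ)
    {j a : Fin n} (h : r j a) (hne : j ≠ a) : σ⁻¹ j < σ⁻¹ a :=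
  (hσ j a h).lt_of_ne (σ⁻¹.injective.ne hne)

lemma decRel_abrShape_iff {σ : Equiv.Perm (Fin n)} {j a : Fin n} :
    (abrShape σ).decRel j a ↔ a < j ∧ ∀ i, a < i → i ≤ j → σ⁻¹ i < σ⁻¹ a := by
  refine and_congr_right fun haj => ?_
  have key := BT.le_add_rightSize_shape_abr_iff (wordOf_perm σ) (a := a + 1) (j := j + 1)
    (by simpa using haj)
  rw [rightSize_add_one _ 0 a, add_right_comm, Nat.add_le_add_iff_right] at key
  refine key.trans ⟨fun h i hai hij => ?_, fun h i hai hij => ?_⟩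
  · exact (pair_sublist_wordOf_iff σ i a).1 (h _ (by simpa using hai) (by simpa using hij))
  · obtain ⟨i, rfl⟩ : ∃ i' : Fin n, (i' : ℕ) + 1 = i := ⟨⟨i - 1, by omega⟩, by simp; omega⟩
    exact (pair_sublist_wordOf_iff σ i a).2 (h i (by simpa using hai) (by simpa using hij))

lemma incRel_abrShape_iff {σ : Equiv.Perm (Fin n)} {j a : Fin n} :
    (abrShape σ).incRel j a ↔ j < a ∧ ∀ i, j ≤ i → i < a → σ⁻¹ i < σ⁻¹ a := by
  refine and_congr_right fun hja => ?_
  have key := BT.add_leftSize_shape_abr_iff (wordOf_perm σ) (a := a + 1) (j := j + 1)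
    (by simpa using hja)
  rw [leftSize_add_one _ 0 a, add_right_comm, Nat.add_le_add_iff_right] at key
  refine key.trans ⟨fun h i hji hia => ?_, fun h i hji hia => ?_⟩
  · exact (pair_sublist_wordOf_iff σ i a).1 (h _ (by simpa using hji) (by simpa using hia))
  · obtain ⟨i, rfl⟩ : ∃ i' : Fin n, (i' : ℕ) + 1 = i := ⟨⟨i - 1, by omega⟩, by simp; omega⟩
    exact (pair_sublist_wordOf_iff σ i a).2 (h i (by simpa using hji) (by simpa using hia))

theorem tamariLE_abrShape_iff {T : Tree0} (hT : T.size = n) (σ : Equiv.Perm (Fin n)) :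
    tamariLE T (abrShape σ) ↔ IsLinExtOf T.decRel σ := by
  rw [tamariLE_iff_decRel_imp hT (size_abrShape σ)]
  refine ⟨fun h j a hja => ((decRel_abrShape_iff.1 (h j a hja)).2 j hja.1 le_rfl).le,
    fun h j a hja => decRel_abrShape_iff.2 ⟨hja.1, fun i hai hij => ?_⟩⟩
  exact h.lt (hja.of_le hai hij) hai.ne'

theorem abrShape_tamariLE_iff {T : Tree0} (hT : T.size = n) (σ : Equiv.Perm (Fin n)) :
    tamariLE (abrShape σ) T ↔ IsLinExtOf T.incRel σ := by
  rw [tamariLE_iff_incRel_imp hT (size_abrShape σ)]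
  refine ⟨fun h j a hja => ((incRel_abrShape_iff.1 (h j a hja)).2 j le_rfl hja.1).le,
    fun h j a hja => incRel_abrShape_iff.2 ⟨hja.1, fun i hji hia => ?_⟩⟩
  exact h.lt (hja.of_le hji hia) hia.ne

/-- Sorting by the size of the principal down-sets gives a linear extension. -/
lemma exists_perm_lt_of_rel [IsPartialOrder (Fin n) r] :
    ∃ σ : Equiv.Perm (Fin n), ∀ x y, r x y → x ≠ y → σ⁻¹ x < σ⁻¹ y := by
  classical
  let rank (x : Fin n) : ℕ := (Finset.univ.filter (r · x)).card
  have hrank (x y : Fin n) (hxy : r x y) (hne : x ≠ y) : rank x < rank y := by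
    refine Finset.card_lt_card ⟨fun z hz => ?_, fun hsub => hne ?_⟩
    · simp only [Finset.mem_filter, Finset.mem_univ, true_and] at hz ⊢
      exact trans_of r hz hxy
    · have := hsub (by simpa using refl y)
      exact antisymm hxy (by simpa using this)
  refine ⟨Tuple.sort rank, fun x y hxy hne => ?_⟩
  by_contra! h
  have := Tuple.monotone_sort rank h
  simp only [Function.comp_apply, Equiv.Perm.coe_inv, Equiv.apply_symm_apply] at this
  exact absurd (hrank x y hxy hne) (not_lt.2 this)

lemma exists_isLinExtOf [IsPartialOrder (Fin n) r] : ∃ σ, IsLinExtOf r σ := by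
  obtain ⟨σ, hσ⟩ := exists_perm_lt_of_rel (r := r)
  refine ⟨σ, fun x y hxy => ?_⟩
  rcases eq_or_ne x y with rfl | hne
  · exact le_rfl
  · exact (hσ x y hxy hne).le

lemma exists_isLinExtOf_lt_of_not_rel [IsPartialOrder (Fin n) r] {j t : Fin n} (hjt : ¬ r j t) :
    ∃ σ, IsLinExtOf r σ ∧ σ⁻¹ t < σ⁻¹ j := by
  let r' (x y : Fin n) : Prop := r x y ∨ (r x t ∧ r j y)
  let _ : IsPartialOrder (Fin n) r' :=
    { refl := fun a => .inl (refl a)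
      trans := by
        rintro x y z (hxy | ⟨hxt, hjy⟩) (hyz | ⟨hyt, hjz⟩)
        · exact .inl (trans_of r hxy hyz)
        · exact .inr ⟨trans_of r hxy hyt, hjz⟩
        · exact .inr ⟨hxt, trans_of r hjy hyz⟩
        · exact absurd (trans_of r hjy hyt) hjt
      antisymm := by
        rintro x y (hxy | ⟨hxt, hjy⟩) (hyx | ⟨hyt, hjx⟩)
        · exact antisymm hxy hyx
        · exact absurd (trans_of r hjx (trans_of r hxy hyt)) hjt
        · exact absurd (trans_of r hjy (trans_of r hyx hxt)) hjt
        · exact absurd (trans_of r hjy hyt) hjt }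
  obtain ⟨σ, hσ⟩ := exists_perm_lt_of_rel (r := r')
  have htj : t ≠ j := fun h => hjt (h ▸ refl t)
  refine ⟨σ, fun x y hxy => ?_, hσ t j (.inr ⟨refl t, refl j⟩) htj⟩
  rcases eq_or_ne x y with rfl | hne
  · exact le_rfl
  · exact (hσ x y (.inl hxy) hne).le

theorem rel_iff_reflTransGen_of_isLinExtOf_iff [IsPartialOrder (Fin n) r]
    (h : ∀ σ, IsLinExtOf r σ ↔ IsLinExtOf q σ) (x y : Fin n) :
    r x y ↔ Relation.ReflTransGen q x y := by
  have hqr : q ≤ r := fun a b hab => by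
    by_contra hn
    obtain ⟨σ, hσ, hlt⟩ := exists_isLinExtOf_lt_of_not_rel hn
    exact absurd ((h σ).1 hσ a b hab) (not_le.2 hlt)
  have hle : Relation.ReflTransGen q ≤ r := Relation.reflTransGen_le_of_le hqr
  refine ⟨fun hxy => ?_, hle x y⟩
  by_contra hn
  let _ : IsPartialOrder (Fin n) (Relation.ReflTransGen q) :=
    { refl := fun _ => .refl
      trans := fun _ _ _ => .trans
      antisymm := fun a b hab hba => antisymm (hle a b hab) (hle b a hba) }
  obtain ⟨σ, hσ, hlt⟩ := exists_isLinExtOf_lt_of_not_rel hn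
  have : IsLinExtOf r σ := (h σ).2 fun a b hab => hσ a b (.single hab)
  exact absurd (this x y hxy) (not_le.2 hlt)

/-- Conditions (1) and (2) of the interval-poset characterization. -/
def IsIntervalClosed (r : Fin n → Fin n → Prop) : Prop :=
  (∀ a b c : Fin n, a < c → r a c → a < b → b < c → r b c) ∧
  (∀ a b c : Fin n, a < c → r c a → a < b → b < c → r b a)

lemma IsIntervalClosed.reflTransGen (h : IsIntervalClosed q) :
    IsIntervalClosed (Relation.ReflTransGen q) := by
  constructor
  · rintro a b c - hac hab hbc
    induction hac using Relation.ReflTransGen.head_induction_on generalizing b with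
    | refl => exact absurd (hab.trans hbc) (lt_irrefl _)
    | @head x y hxy hyc ih =>
      rcases lt_trichotomy y b with hyb | rfl | hby
      · exact ih b hyb hbc
      · exact hyc
      · exact .head (h.1 x b y (hab.trans hby) hxy hab hby) hyc
  · rintro a b c - hca hab hbc
    induction hca using Relation.ReflTransGen.head_induction_on generalizing b with
    | refl => exact absurd (hab.trans hbc) (lt_irrefl _)
    | @head x y hxy hya ih =>
      rcases lt_trichotomy y b with hyb | rfl | hby
      · exact .head (h.2 y b x (hyb.trans hbc) hxy hyb hbc) hya
      · exact hya
      · exact ih b hab hby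

lemma isIntervalClosed_decRel_or_incRel (T₁ T₂ : Tree0) :
    IsIntervalClosed fun j a : Fin n => T₁.decRel j a ∨ T₂.incRel j a := by
  constructor
  · rintro a b c hac (hdec | hinc) hab hbc
    · exact absurd hdec.1 hac.not_gt
    · exact .inr (hinc.of_le hab.le hbc)
  · rintro a b c hac (hdec | hinc) hab hbc
    · exact .inl (hdec.of_le hab hbc.le)
    · exact absurd hinc.1 hac.not_gt

theorem exists_decRel_iff (D : Fin n → Fin n → Prop) (hlt : ∀ j a, D j a → a < j)
    (hint : ∀ a i j, a < i → i < j → D j a → D i a)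
    (htrans : ∀ a d e, D e d → D d a → D e a) :
    ∃ T : Tree0, T.size = n ∧ ∀ j a, T.decRel j a ↔ D j a := by
  obtain ⟨T, hT, hiff⟩ := exists_rightSize_iff
    (fun j a => ∃ (hj : j < n) (ha : a < n), D ⟨j, hj⟩ ⟨a, ha⟩) n 0
    (fun a i j _ hai hij hj ⟨_, ha, hD⟩ => ⟨by omega, ha, hint _ ⟨i, by omega⟩ _ hai hij hD⟩)
    (fun a d e _ _ _ he ⟨_, hd, hDed⟩ ⟨_, ha, hDda⟩ => ⟨by omega, ha, htrans _ _ _ hDed hDda⟩)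
  refine ⟨T, hT, fun j a => ?_⟩
  by_cases haj : a < j
  · simp only [decRel, haj, true_and]
    rw [hiff a j (Nat.zero_le _) haj (by simp)]
    simp
  · exact iff_of_false (fun h => haj h.1) fun h => haj (hlt _ _ h)

theorem exists_incRel_iff (I : Fin n → Fin n → Prop) (hlt : ∀ j a, I j a → j < a)
    (hint : ∀ a i j, j < i → i < a → I j a → I i a)
    (htrans : ∀ a d e, I e d → I d a → I e a) :
    ∃ T : Tree0, T.size = n ∧ ∀ j a, T.incRel j a ↔ I j a := by
  obtain ⟨T, hT, hiff⟩ := exists_leftSize_iff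
    (fun j a => ∃ (hj : j < n) (ha : a < n), I ⟨j, hj⟩ ⟨a, ha⟩) n 0
    (fun a i j _ hji hia ha ⟨hj, _, hI⟩ =>
      ⟨by omega, by omega, hint ⟨a, by omega⟩ ⟨i, by omega⟩ ⟨j, hj⟩ hji hia hI⟩)
    (fun a d e _ _ _ ha ⟨he, _, hIed⟩ ⟨_, _, hIda⟩ => ⟨he, by omega, htrans _ _ _ hIed hIda⟩)
  refine ⟨T, hT, fun j a => ?_⟩
  by_cases hja : j < a
  · simp only [incRel, hja, true_and]
    rw [hiff a j (Nat.zero_le _) hja (by simp)]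
    simp
  · exact iff_of_false (fun h => hja h.1) fun h => hja (hlt _ _ h)

theorem isIntervalClosed_of_isLinExtOf_iff {le : Fin n → Fin n → Prop} [IsPartialOrder (Fin n) le]
    {T₁ T₂ : Tree0} (hT₁ : T₁.size = n) (hT₂ : T₂.size = n)
    (h : ∀ σ, IsLinExtOf le σ ↔ tamariLE T₁ (abrShape σ) ∧ tamariLE (abrShape σ) T₂) :
    IsIntervalClosed le := by
  have hq (σ : Equiv.Perm (Fin n)) :
      IsLinExtOf le σ ↔ IsLinExtOf (fun j a => T₁.decRel j a ∨ T₂.incRel j a) σ := by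
    rw [h, tamariLE_abrShape_iff hT₁, abrShape_tamariLE_iff hT₂]
    exact ⟨fun ⟨h₁, h₂⟩ j a => Or.rec (h₁ j a) (h₂ j a),
      fun h' => ⟨fun j a hja => h' j a (.inl hja), fun j a hja => h' j a (.inr hja)⟩⟩
  have hle : le = Relation.ReflTransGen _ :=
    funext₂ fun x y => propext (rel_iff_reflTransGen_of_isLinExtOf_iff hq x y)
  rw [hle]
  exact (isIntervalClosed_decRel_or_incRel T₁ T₂).reflTransGen

theorem exists_tamari_interval_of_isIntervalClosed {le : Fin n → Fin n → Prop}
    [IsPartialOrder (Fin n) le] (h : IsIntervalClosed le) :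
    ∃ T₁ T₂ : Tree0, T₁.size = n ∧ tamariLE T₁ T₂ ∧
      ∀ σ, IsLinExtOf le σ ↔ tamariLE T₁ (abrShape σ) ∧ tamariLE (abrShape σ) T₂ := by
  obtain ⟨T₁, hT₁, hdec⟩ := exists_decRel_iff (fun j a => a < j ∧ le j a) (fun _ _ h => h.1)
    (fun a i j hai hij ⟨haj, hja⟩ => ⟨hai, h.2 a i j haj hja hai hij⟩)
    (fun a d e ⟨hde, hed⟩ ⟨had, hda⟩ => ⟨had.trans hde, trans_of le hed hda⟩)
  obtain ⟨T₂, hT₂, hinc⟩ := exists_incRel_iff (fun j a => j < a ∧ le j a) (fun _ _ h => h.1)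
    (fun a i j hji hia ⟨hja, hle⟩ => ⟨hia, h.1 j i a hja hle hji hia⟩)
    (fun a d e ⟨hed, hle⟩ ⟨hda, hle'⟩ => ⟨hed.trans hda, trans_of le hle hle'⟩)
  have hσ (σ : Equiv.Perm (Fin n)) :
      IsLinExtOf le σ ↔ tamariLE T₁ (abrShape σ) ∧ tamariLE (abrShape σ) T₂ := by
    rw [tamariLE_abrShape_iff hT₁, abrShape_tamariLE_iff hT₂]
    refine ⟨fun hσ => ⟨fun j a hja => hσ j a ((hdec j a).1 hja).2,
      fun j a hja => hσ j a ((hinc j a).1 hja).2⟩, fun ⟨h₁, h₂⟩ j a hja => ?_⟩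
    rcases lt_trichotomy j a with hlt | rfl | hgt
    · exact h₂ j a ((hinc j a).2 ⟨hlt, hja⟩)
    · exact le_rfl
    · exact h₁ j a ((hdec j a).2 ⟨hgt, hja⟩)
  obtain ⟨σ, hσle⟩ := exists_isLinExtOf (r := le)
  obtain ⟨h₁, h₂⟩ := (hσ σ).1 hσle
  exact ⟨T₁, T₂, hT₁, h₁.trans h₂, hσ⟩

end Forests

/-- A partial order `⊴` on `{1,…,n}` is a Tamari interval-poset
(its linear extensions are exactly the union of the sylvester classes of the trees in
some Tamari interval `[T₁, T₂]`) iff it satisfies: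
(1) `a < c` and `a ⊴ c` imply `b ⊴ c` for all `a < b < c`, and
(2) `a < c` and `c ⊴ a` imply `b ⊴ a` for all `a < b < c`. -/
theorem interval_poset_characterization (n : ℕ)
    (le : Fin n → Fin n → Prop)
    (hrefl : ∀ a, le a a)
    (hantisymm : ∀ a b, le a b → le b a → a = b)
    (htrans : ∀ a b c, le a b → le b c → le a c) :
    (∃ T₁ T₂ : Tree0, T₁.size = n ∧ Tree0.tamariLE T₁ T₂ ∧
        ∀ σ : Equiv.Perm (Fin n),
          IsLinExtOf le σ ↔
            (Tree0.tamariLE T₁ (abrShape σ) ∧ Tree0.tamariLE (abrShape σ) T₂)) ↔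
      ((∀ a b c : Fin n, a < c → le a c → a < b → b < c → le b c) ∧
       (∀ a b c : Fin n, a < c → le c a → a < b → b < c → le b a)) := by
  have : IsPartialOrder (Fin n) le := { refl := hrefl, trans := htrans, antisymm := hantisymm }
  refine ⟨fun ⟨T₁, T₂, hT₁, hT₁₂, h⟩ => ?_, exists_tamari_interval_of_isIntervalClosed⟩
  exact isIntervalClosed_of_isLinExtOf_iff hT₁ (hT₁₂.size_eq.trans hT₁) h
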